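/- arXiv:1810.08665 — 2 statements merged into one kernel-verified Lean document; each statement's English description precedes it below -/
import Mathlib

section
/- Let G be a simple, 3-edge-connected graph with gon(G) = 3, and let D be an effective divisor on G with deg(D) = 3 and r(D) = 1. Then for every vertex v ∈ V(G), there is a unique effective divisor D′ such that D ∼ D′ and v ∈ supp(D′). -/
/-- A finite loopless multigraph: a finite vertex type, a finite edge type,
and an assignment of an unordered pair of distinct endpoints to each edge. -/
structure Multigraph where
  V : Type
  E : Type
  [fintypeV : Fintype V]
  [fintypeE : Fintype E]
  [decEqV : DecidableEq V]
  ends : E → Sym2 V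
  loopless : ∀ e, ¬ (ends e).IsDiag

attribute [instance] Multigraph.fintypeV Multigraph.fintypeE Multigraph.decEqV

namespace Multigraph

/-- The graph obtained by deleting the edges in `W` is connected (finite graphs are
connected iff the vertex set is nonempty and every nonempty proper vertex subset
has an edge leaving it). -/
def ConnectedWithout (G : Multigraph) (W : Set G.E) : Prop :=
  Nonempty G.V ∧
    ∀ A : Finset G.V, A.Nonempty → A ≠ Finset.univ →
      ∃ e, e ∉ W ∧ ∃ u v, G.ends e = s(u, v) ∧ u ∈ A ∧ v ∉ A

/-- `G` is connected. -/
def Connected (G : Multigraph) : Prop := G.ConnectedWithout ∅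

/-- `G` is `k`-edge-connected: deleting any set of at most `k - 1` edges
leaves a connected graph. -/
def EdgeConnected (G : Multigraph) (k : ℕ) : Prop :=
  ∀ W : Finset G.E, W.card < k → G.ConnectedWithout ↑W

/-- An edge is a bridge if deleting it disconnects the graph. -/
def IsBridge (G : Multigraph) (e : G.E) : Prop := ¬ G.ConnectedWithout {e}

/-- The graph obtained by deleting the vertices in `U` (and all incident edges)
is connected. -/
def ConnectedAvoiding (G : Multigraph) (U : Set G.V) : Prop :=
  (∃ v, v ∉ U) ∧
    ∀ A : Finset G.V, A.Nonempty → (∀ a ∈ A, a ∉ U) → (∃ w, w ∉ U ∧ w ∉ A) →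
      ∃ e u v, G.ends e = s(u, v) ∧ u ∈ A ∧ v ∉ A ∧ v ∉ U

/-- `G` is `k`-vertex-connected: deleting any set of at most `k - 1` vertices
leaves a connected graph. -/
def VertexConnected (G : Multigraph) (k : ℕ) : Prop :=
  ∀ U : Finset G.V, U.card < k → G.ConnectedAvoiding ↑U

/-- `G` is simple: no two distinct edges have the same pair of endpoints. -/
def Simple (G : Multigraph) : Prop :=
  ∀ e e' : G.E, G.ends e = G.ends e' → e = e'

/-- The genus `g(G) = |E| - |V| + 1`. -/
def genus (G : Multigraph) : ℤ :=
  (Fintype.card G.E : ℤ) - (Fintype.card G.V : ℤ) + 1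

/-- A tree is a connected graph of genus 0. -/
def IsTree (G : Multigraph) : Prop := G.Connected ∧ G.genus = 0

/-- The number of edges joining `u` and `v`. -/
noncomputable def numEdges (G : Multigraph) (u v : G.V) : ℕ :=
  Set.ncard {e : G.E | G.ends e = s(u, v)}

/-- The valence of a vertex: the number of incident edges. -/
noncomputable def valence (G : Multigraph) (v : G.V) : ℕ :=
  Set.ncard {e : G.E | v ∈ G.ends e}

/-- A divisor on `G`: an element of the free abelian group on `V(G)`. -/
abbrev Divisor (G : Multigraph) : Type := G.V → ℤ

/-- The degree of a divisor: the sum of its coefficients. -/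
def degree (G : Multigraph) (D : G.Divisor) : ℤ := ∑ v, D v

/-- A divisor is effective if all its coefficients are nonnegative. -/
def Effective (G : Multigraph) (D : G.Divisor) : Prop := ∀ v, 0 ≤ D v

/-- The Laplacian of `G` applied to an integer vector `f`. -/
noncomputable def laplacian (G : Multigraph) (f : G.V → ℤ) : G.Divisor :=
  fun v => ∑ w, (G.numEdges v w : ℤ) * (f v - f w)

/-- Linear equivalence of divisors: the difference is in the image of the Laplacian. -/
def LinEquiv (G : Multigraph) (D D' : G.Divisor) : Prop :=
  ∃ f : G.V → ℤ, D - D' = G.laplacian f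

/-- `D - F` is equivalent to an effective divisor for every effective `F` of degree `k`. -/
def RankGe (G : Multigraph) (D : G.Divisor) (k : ℤ) : Prop :=
  ∀ F : G.Divisor, G.Effective F → G.degree F = k →
    ∃ E' : G.Divisor, G.Effective E' ∧ G.LinEquiv (D - F) E'

/-- The Baker–Norine rank of a divisor. -/
noncomputable def rank (G : Multigraph) (D : G.Divisor) : ℤ :=
  sSup {r : ℤ | r = -1 ∨ (0 ≤ r ∧ G.RankGe D r)}

/-- The (divisorial) gonality of `G`: the minimum degree of an effective divisor
of rank at least 1. -/
noncomputable def gonality (G : Multigraph) : ℕ :=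
  sInf {n : ℕ | ∃ D : G.Divisor, G.Effective D ∧ G.degree D = (n : ℤ) ∧ 1 ≤ G.rank D}

end Multigraph

/-- A morphism of multigraphs: vertices map to vertices, and each edge maps either
to an edge joining the images of its endpoints (if they are distinct) or to the
common image of its endpoints. -/
structure Morphism (G G' : Multigraph) where
  vertexMap : G.V → G'.V
  edgeMap : G.E → G'.E ⊕ G'.V
  map_edge_of_eq : ∀ e u v, G.ends e = s(u, v) → vertexMap u = vertexMap v →
    edgeMap e = Sum.inr (vertexMap u)
  map_edge_of_ne : ∀ e u v, G.ends e = s(u, v) → vertexMap u ≠ vertexMap v →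
    ∃ e', edgeMap e = Sum.inl e' ∧ G'.ends e' = s(vertexMap u, vertexMap v)

namespace Morphism

variable {G G' : Multigraph}

/-- The multiplicity `m_φ(v)` of `φ` at `v` with respect to an edge `e'` of `G'`. -/
noncomputable def mult (φ : Morphism G G') (v : G.V) (e' : G'.E) : ℕ :=
  Set.ncard {e : G.E | v ∈ G.ends e ∧ φ.edgeMap e = Sum.inl e'}

/-- `φ` is harmonic if `m_φ(v)` does not depend on the chosen edge `e'`
incident to `φ(v)`. -/
def Harmonic (φ : Morphism G G') : Prop :=
  ∀ (v : G.V) (e₁ e₂ : G'.E),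
    φ.vertexMap v ∈ G'.ends e₁ → φ.vertexMap v ∈ G'.ends e₂ →
      φ.mult v e₁ = φ.mult v e₂

/-- `φ` is non-degenerate if `m_φ(v) > 0` for every vertex `v`. -/
def Nondegenerate (φ : Morphism G G') : Prop :=
  ∀ (v : G.V) (e' : G'.E), φ.vertexMap v ∈ G'.ends e' → 0 < φ.mult v e'

/-- `φ` has degree `d`: every edge of `G'` has exactly `d` preimages. -/
def HasDegree (φ : Morphism G G') (d : ℕ) : Prop :=
  Nonempty G'.E ∧ ∀ e' : G'.E, Set.ncard {e : G.E | φ.edgeMap e = Sum.inl e'} = d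

end Morphism

/-
If `D₁ ∼ D₂` are distinct effective divisors, write `D₁ - D₂ = Δf` and let `A` be the set where
`f` attains its maximum. Each edge leaving `A` contributes at least one to `∑_{u ∈ A} (Δf)(u)`,
so on a `k`-edge-connected graph `∑_A D₁ - ∑_A D₂ ≥ k`. When `deg D₁ ≤ k` this forces `D₁` to be
supported in `A` and `D₂` outside `A`, so the two supports are disjoint: a vertex lies in the
support of at most one divisor of `|D|`. It lies in at least one because `r(D) ≥ 1`.
-/

namespace Multigraph

variable {G : Multigraph}

lemma numEdges_comm (u w : G.V) : G.numEdges u w = G.numEdges w u := by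
  simp only [numEdges, Sym2.eq_swap]

lemma numEdges_eq_card (u w : G.V) :
    G.numEdges u w = (Finset.univ.filter fun e => G.ends e = s(u, w)).card := by
  rw [numEdges, Set.ncard_eq_toFinset_card']
  congr 1
  ext e
  simp

lemma sum_laplacian (f : G.V → ℤ) : ∑ u, G.laplacian f u = 0 := by
  have hswap : ∑ u, ∑ w, (G.numEdges u w : ℤ) * f w = ∑ u, ∑ w, (G.numEdges u w : ℤ) * f u := by
    rw [Finset.sum_comm]
    simp only [numEdges_comm]
  simp only [laplacian, mul_sub, Finset.sum_sub_distrib, hswap, sub_self]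

lemma laplacian_add (f g : G.V → ℤ) :
    G.laplacian (f + g) = G.laplacian f + G.laplacian g := by
  funext u
  simp only [laplacian, Pi.add_apply, ← Finset.sum_add_distrib]
  congr 1; ext w; ring

lemma laplacian_neg (f : G.V → ℤ) : G.laplacian (-f) = -G.laplacian f := by
  funext u
  simp only [laplacian, Pi.neg_apply, ← Finset.sum_neg_distrib]
  congr 1; ext w; ring

lemma laplacian_const (c : ℤ) : G.laplacian (fun _ => c) = 0 := by
  funext u
  simp [laplacian]

namespace LinEquiv

variable {D₁ D₂ D₃ : G.Divisor}

lemma symm (h : G.LinEquiv D₁ D₂) : G.LinEquiv D₂ D₁ := by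
  obtain ⟨f, hf⟩ := h
  exact ⟨-f, by rw [laplacian_neg, ← hf, neg_sub]⟩

lemma trans (h₁₂ : G.LinEquiv D₁ D₂) (h₂₃ : G.LinEquiv D₂ D₃) : G.LinEquiv D₁ D₃ := by
  obtain ⟨f, hf⟩ := h₁₂
  obtain ⟨g, hg⟩ := h₂₃
  exact ⟨f + g, by rw [laplacian_add, ← hf, ← hg, sub_add_sub_cancel]⟩

lemma degree_eq (h : G.LinEquiv D₁ D₂) : G.degree D₁ = G.degree D₂ := by
  obtain ⟨f, hf⟩ := h
  have hsum := G.sum_laplacian f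
  rw [← hf] at hsum
  simp only [degree, Pi.sub_apply, Finset.sum_sub_distrib] at hsum ⊢
  omega

end LinEquiv

lemma rankGe_of_rank_eq {D : G.Divisor} {r : ℤ} (hr : 0 < r) (h : G.rank D = r) :
    G.RankGe D r := by
  set S : Set ℤ := {s : ℤ | s = -1 ∨ (0 ≤ s ∧ G.RankGe D s)}
  have hbdd : BddAbove S := by
    -- an unbounded set of integers has the junk supremum `0`, which `0 < r` rules out
    by_contra hunbdd
    have h0 : G.rank D = 0 := Int.csSup_of_not_bddAbove hunbdd
    omega
  have hmem : r ∈ S := h ▸ Int.csSup_mem ⟨-1, Or.inl rfl⟩ hbdd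
  rcases hmem with hneg | ⟨-, hge⟩
  · omega
  · exact hge

lemma exists_linEquiv_pos_of_rankGe_one {D : G.Divisor} (h : G.RankGe D 1) (v : G.V) :
    ∃ D' : G.Divisor, G.Effective D' ∧ G.LinEquiv D D' ∧ 0 < D' v := by
  have hv : G.Effective (Pi.single v 1) := fun w =>
    (Pi.single_nonneg.mpr zero_le_one : (0 : G.Divisor) ≤ Pi.single v 1) w
  obtain ⟨E, hE, hDE⟩ := h (Pi.single v 1) hv (by simp [degree])
  refine ⟨E + Pi.single v 1, fun w => add_nonneg (hE w) (hv w), ?_, ?_⟩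
  · obtain ⟨f, hf⟩ := hDE
    exact ⟨f, by rw [← hf, sub_add_eq_sub_sub, sub_right_comm]⟩
  · simpa using Int.add_pos_of_nonneg_of_pos (hE v) zero_lt_one

open Classical in
noncomputable def edgeBoundary (G : Multigraph) (A : Finset G.V) : Finset G.E :=
  Finset.univ.filter fun e => ∃ u w, G.ends e = s(u, w) ∧ u ∈ A ∧ w ∉ A

lemma EdgeConnected.le_card_edgeBoundary {k : ℕ} (hk : G.EdgeConnected k) {A : Finset G.V}
    (hA : A.Nonempty) (hA' : A ≠ Finset.univ) : k ≤ (G.edgeBoundary A).card := by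
  by_contra! hlt
  obtain ⟨e, he, u, w, hends, hu, hw⟩ := (hk _ hlt).2 A hA hA'
  exact he (by simpa [edgeBoundary] using ⟨u, w, hends, hu, hw⟩)

lemma card_edgeBoundary_le (A : Finset G.V) :
    (G.edgeBoundary A).card ≤ ∑ u ∈ A, ∑ w ∈ Aᶜ, G.numEdges u w := by
  classical
  calc (G.edgeBoundary A).card
      ≤ ((A ×ˢ Aᶜ).biUnion fun p => Finset.univ.filter fun e => G.ends e = s(p.1, p.2)).card := by
        refine Finset.card_le_card fun e he => ?_
        obtain ⟨u, w, hends, hu, hw⟩ := by simpa [edgeBoundary] using he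
        exact Finset.mem_biUnion.mpr ⟨(u, w), by simp [hu, hw], by simp [hends]⟩
    _ ≤ ∑ p ∈ A ×ˢ Aᶜ, (Finset.univ.filter fun e => G.ends e = s(p.1, p.2)).card :=
        Finset.card_biUnion_le
    _ = ∑ u ∈ A, ∑ w ∈ Aᶜ, G.numEdges u w := by
        simp only [Finset.sum_product, numEdges_eq_card]

lemma sum_numEdges_compl_le_laplacian (f : G.V → ℤ) {A : Finset G.V} {u : G.V}
    (hmax : ∀ w, f w ≤ f u) (hlt : ∀ w ∉ A, f w < f u) :
    ∑ w ∈ Aᶜ, (G.numEdges u w : ℤ) ≤ G.laplacian f u :=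
  calc ∑ w ∈ Aᶜ, (G.numEdges u w : ℤ)
      ≤ ∑ w ∈ Aᶜ, (G.numEdges u w : ℤ) * (f u - f w) := by
        refine Finset.sum_le_sum fun w hw => le_mul_of_one_le_right (by positivity) ?_
        have := hlt w (Finset.mem_compl.mp hw)
        omega
    _ ≤ G.laplacian f u :=
        Finset.sum_le_sum_of_subset_of_nonneg (Finset.subset_univ _) fun w _ _ =>
          mul_nonneg (by positivity) (sub_nonneg.mpr (hmax w))

lemma LinEquiv.exists_le_sum_sub_sum {k : ℕ} (hk : G.EdgeConnected k) {D₁ D₂ : G.Divisor}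
    (h : G.LinEquiv D₁ D₂) (hne : D₁ ≠ D₂) :
    ∃ A : Finset G.V, (k : ℤ) ≤ ∑ u ∈ A, D₁ u - ∑ u ∈ A, D₂ u := by
  classical
  obtain ⟨f, hf⟩ := h
  obtain ⟨v, -⟩ := Function.ne_iff.mp hne
  obtain ⟨a, -, ha⟩ := Finset.exists_max_image Finset.univ f ⟨v, Finset.mem_univ v⟩
  set A := Finset.univ.filter fun x => f x = f a
  have hmem : ∀ x, x ∈ A ↔ f x = f a := by simp [A]
  have hA : A.Nonempty := ⟨a, (hmem a).mpr rfl⟩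
  have hA' : A ≠ Finset.univ := by
    intro hAuniv
    have hconst : f = fun _ => f a := funext fun x => (hmem x).mp (hAuniv ▸ Finset.mem_univ x)
    exact hne (sub_eq_zero.mp (by rw [hf, hconst, laplacian_const]))
  have hLA : ∀ u ∈ A, ∑ w ∈ Aᶜ, (G.numEdges u w : ℤ) ≤ G.laplacian f u := by
    intro u hu
    rw [hmem] at hu
    refine sum_numEdges_compl_le_laplacian f (fun w => hu ▸ ha w (Finset.mem_univ w)) fun w hw => ?_
    have := ha w (Finset.mem_univ w)
    have := (hmem w).not.mp hw
    omega
  refine ⟨A, ?_⟩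
  calc (k : ℤ) ≤ (G.edgeBoundary A).card := by exact_mod_cast hk.le_card_edgeBoundary hA hA'
    _ ≤ ∑ u ∈ A, ∑ w ∈ Aᶜ, (G.numEdges u w : ℤ) := by exact_mod_cast G.card_edgeBoundary_le A
    _ ≤ ∑ u ∈ A, G.laplacian f u := Finset.sum_le_sum hLA
    _ = ∑ u ∈ A, D₁ u - ∑ u ∈ A, D₂ u := by rw [← Finset.sum_sub_distrib, ← hf]; rfl

lemma LinEquiv.eq_of_pos {k : ℕ} (hk : G.EdgeConnected k) {D₁ D₂ : G.Divisor}
    (h : G.LinEquiv D₁ D₂) (h₁ : G.Effective D₁) (h₂ : G.Effective D₂)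
    (hdeg : G.degree D₁ ≤ k) {v : G.V} (hv₁ : 0 < D₁ v) (hv₂ : 0 < D₂ v) : D₁ = D₂ := by
  by_contra hne
  obtain ⟨A, hA⟩ := h.exists_le_sum_sub_sum hk hne
  have hsplit : ∑ u ∈ A, D₁ u + ∑ u ∈ Aᶜ, D₁ u = G.degree D₁ := Finset.sum_add_sum_compl A D₁
  have hA₂ : 0 ≤ ∑ u ∈ A, D₂ u := Finset.sum_nonneg fun u _ => h₂ u
  by_cases hvA : v ∈ A
  · have := Finset.single_le_sum (fun u _ => h₂ u) hvA
    have := Finset.sum_nonneg fun u (_ : u ∈ Aᶜ) => h₁ u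
    omega
  · have := Finset.single_le_sum (fun u _ => h₁ u) (Finset.mem_compl.mpr hvA)
    omega

end Multigraph

theorem stmt_2_general (G : Multigraph) (h3 : G.EdgeConnected 3)
    (D : G.Divisor) (hdeg : G.degree D = 3)
    (hrank : G.rank D = 1) (v : G.V) :
    ∃! D' : G.Divisor, G.Effective D' ∧ G.LinEquiv D D' ∧ 0 < D' v := by
  obtain ⟨D', hD', hDD', hv⟩ :=
    Multigraph.exists_linEquiv_pos_of_rankGe_one (Multigraph.rankGe_of_rank_eq one_pos hrank) v
  refine ⟨D', ⟨hD', hDD', hv⟩, fun D'' ⟨hD'', hDD'', hv'⟩ => ?_⟩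
  refine (hDD''.symm.trans hDD').eq_of_pos h3 hD'' hD' ?_ hv' hv
  rw [← hDD''.degree_eq, hdeg]
  rfl

/-- If `G` is simple, 3-edge-connected of gonality 3 and `D` is an
effective divisor of degree 3 and rank 1 on `G`, then every vertex `v` lies in the
support of a unique effective divisor linearly equivalent to `D`. -/
theorem stmt_2 (G : Multigraph) (hG : G.Connected) (hs : G.Simple)
    (h3 : G.EdgeConnected 3) (hgon : G.gonality = 3)
    (D : G.Divisor) (hD : G.Effective D) (hdeg : G.degree D = 3)
    (hrank : G.rank D = 1) (v : G.V) :
    ∃! D' : G.Divisor, G.Effective D' ∧ G.LinEquiv D D' ∧ 0 < D' v :=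
  stmt_2_general G h3 D hdeg hrank v
end

section
/- Let G be a graph and let G′ be the graph obtained from G by contracting every bridge of G. Then gon(G) = 3 if and only if gon(G′) = 3. -/
open Finset

namespace Multigraph

def pushforward {α β : Type*} [Fintype α] [DecidableEq β] (φ : α → β) :
    (α → ℤ) →+ (β → ℤ) where
  toFun D b := ∑ a ∈ univ.filter (fun a => φ a = b), D a
  map_zero' := by ext; simp
  map_add' D D' := by ext; simp [sum_add_distrib]

section pushforward

variable {α β γ : Type*} [Fintype α] [DecidableEq β]

lemma pushforward_single [DecidableEq α] (φ : α → β) (a : α) (n : ℤ) :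
    pushforward φ (Pi.single a n) = Pi.single (φ a) n := by
  ext b
  simp [pushforward, Pi.single_apply, eq_comm]

lemma pushforward_pushforward [DecidableEq α] [Fintype β] [DecidableEq γ] (φ : α → β)
    (ψ : β → γ) (D : α → ℤ) : pushforward ψ (pushforward φ D) = pushforward (ψ ∘ φ) D := by
  rw [← univ_sum_single D]
  simp only [map_sum]
  refine sum_congr rfl fun a _ => ?_
  rw [pushforward_single, pushforward_single, pushforward_single, Function.comp_apply]

lemma pushforward_id [DecidableEq α] (D : α → ℤ) : pushforward id D = D := by
  rw [← univ_sum_single D]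
  simp only [map_sum, pushforward_single, id]

lemma sum_pushforward [Fintype β] (φ : α → β) (D : α → ℤ) :
    ∑ b, pushforward φ D b = ∑ a, D a :=
  sum_fiberwise univ φ D

lemma pushforward_nonneg (φ : α → β) {D : α → ℤ} (hD : ∀ a, 0 ≤ D a) (b : β) :
    0 ≤ pushforward φ D b :=
  sum_nonneg fun a _ => hD a

end pushforward

variable (G : Multigraph)

lemma exists_ends_eq (e : G.E) : ∃ a b, G.ends e = s(a, b) :=
  Sym2.ind (f := fun z => ∃ a b, z = s(a, b)) (fun a b => ⟨a, b, rfl⟩) (G.ends e)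

variable {G} in
lemma ne_of_ends_eq {e : G.E} {a b : G.V} (h : G.ends e = s(a, b)) : a ≠ b :=
  fun hab => G.loopless e (h ▸ Sym2.mk_isDiag_iff.mpr hab)

noncomputable def laplacianHom : (G.V → ℤ) →+ G.Divisor where
  toFun := G.laplacian
  map_zero' := by ext; simp [laplacian]
  map_add' f g := by
    ext v
    simp only [laplacian, Pi.add_apply, ← sum_add_distrib]
    exact sum_congr rfl fun w _ => by ring

noncomputable def principal : AddSubgroup G.Divisor := G.laplacianHom.range

lemma laplacian_mem_principal (f : G.V → ℤ) : G.laplacian f ∈ G.principal := ⟨f, rfl⟩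

lemma linEquiv_iff_sub_mem_principal {D D' : G.Divisor} :
    G.LinEquiv D D' ↔ D - D' ∈ G.principal := by
  simp [LinEquiv, principal, laplacianHom, eq_comm]

def edgeLaplacian (f : G.V → ℤ) (e : G.E) : G.Divisor :=
  Sym2.lift ⟨fun a b => (f a - f b) • (Pi.single a 1 - Pi.single b 1),
    fun a b => by simp only [← neg_sub (f a), ← neg_sub (Pi.single a 1), neg_smul_neg]⟩ (G.ends e)

variable {G} in
lemma edgeLaplacian_of_ends_eq {e : G.E} {a b : G.V} (h : G.ends e = s(a, b)) (f : G.V → ℤ) :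
    G.edgeLaplacian f e = (f a - f b) • (Pi.single a 1 - Pi.single b 1) := by
  rw [edgeLaplacian, h, Sym2.lift_mk]

lemma numEdges_eq_sum (v w : G.V) :
    (G.numEdges v w : ℤ) = ∑ e, if G.ends e = s(v, w) then 1 else 0 := by
  rw [sum_boole, numEdges, Set.ncard_eq_toFinset_card', Set.toFinset_ofPred]

lemma laplacian_eq_sum_edgeLaplacian (f : G.V → ℤ) :
    G.laplacian f = ∑ e, G.edgeLaplacian f e := by
  ext v
  simp only [laplacian, numEdges_eq_sum, sum_mul, boole_mul, Finset.sum_apply]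
  rw [sum_comm]
  refine sum_congr rfl fun e _ => ?_
  obtain ⟨a, b, hab⟩ := G.exists_ends_eq e
  have hne := ne_of_ends_eq hab
  rw [edgeLaplacian_of_ends_eq hab, hab]
  by_cases hva : v = a
  · subst hva
    simp [hne.symm]
  by_cases hvb : v = b
  · subst hvb
    simp [Sym2.eq_swap (a := a), hva, hne]
  · have hmem : ∀ w, s(a, b) ≠ s(v, w) := fun w h => by
      have := h ▸ Sym2.mem_mk_left v w
      simp_all
    simp [hmem, hva, hvb]

variable {G}

lemma degree_sub (D D' : G.Divisor) : G.degree (D - D') = G.degree D - G.degree D' :=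
  sum_sub_distrib _ _

lemma degree_eq_zero_of_mem_principal {D : G.Divisor} (hD : D ∈ G.principal) :
    G.degree D = 0 := by
  obtain ⟨f, rfl⟩ := hD
  change ∑ v, G.laplacian f v = 0
  simp only [laplacian_eq_sum_edgeLaplacian, Finset.sum_apply]
  rw [sum_comm]
  refine sum_eq_zero fun e _ => ?_
  obtain ⟨a, b, hab⟩ := G.exists_ends_eq e
  simp [edgeLaplacian_of_ends_eq hab, ← mul_sum, sum_sub_distrib]

lemma le_degree_of_rankGe (hV : Nonempty G.V) {D : G.Divisor} {r : ℤ} (hr : 0 ≤ r)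
    (h : G.RankGe D r) : r ≤ G.degree D := by
  obtain ⟨v⟩ := hV
  obtain ⟨E, hE, hDE⟩ := h (Pi.single v r)
    (fun w => by by_cases hw : w = v <;> simp [hw, hr]) (by simp [degree])
  have hdeg := degree_eq_zero_of_mem_principal (G.linEquiv_iff_sub_mem_principal.1 hDE)
  have hE' : 0 ≤ G.degree E := sum_nonneg fun w _ => hE w
  rw [degree_sub, degree_sub] at hdeg
  simp only [degree, sum_pi_single', mem_univ, if_true] at hdeg hE' ⊢
  linarith

lemma rank_le_rank {G' : Multigraph} (hV' : Nonempty G'.V) {D : G.Divisor} {D' : G'.Divisor}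
    (h : ∀ k, 0 ≤ k → G.RankGe D k → G'.RankGe D' k) : G.rank D ≤ G'.rank D' := by
  refine csSup_le_csSup ⟨max (G'.degree D') (-1), ?_⟩ ⟨-1, Or.inl rfl⟩ ?_
  · rintro r (rfl | ⟨hr, hk⟩)
    exacts [le_max_right _ _, (le_degree_of_rankGe hV' hr hk).trans (le_max_left _ _)]
  · rintro r (rfl | ⟨hr, hk⟩)
    exacts [Or.inl rfl, Or.inr ⟨hr, h r hr hk⟩]

lemma IsBridge.exists_cut (hG : G.Connected) {e : G.E} (he : G.IsBridge e) :
    ∃ (χ : G.V → ℤ) (u v : G.V), G.ends e = s(u, v) ∧ χ u = 1 ∧ χ v = 0 ∧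
      ∀ e' ≠ e, ∀ x y, G.ends e' = s(x, y) → χ x = χ y := by
  obtain ⟨hV, hconn⟩ := hG
  obtain ⟨A, hAne, hAuniv, hA⟩ : ∃ A : Finset G.V, A.Nonempty ∧ A ≠ univ ∧
      ∀ e', e' ∉ ({e} : Set G.E) → ∀ u v, G.ends e' = s(u, v) → u ∈ A → v ∈ A := by
    simpa [IsBridge, ConnectedWithout, hV] using he
  obtain ⟨e', -, u, v, huv, hu, hv⟩ := hconn A hAne hAuniv
  obtain rfl : e' = e := by
    by_contra hne
    exact hv (hA e' hne u v huv hu)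
  refine ⟨fun w => if w ∈ A then 1 else 0, u, v, huv, if_pos hu, if_neg hv, ?_⟩
  intro e' he' x y hxy
  have hxy' : x ∈ A ↔ y ∈ A :=
    ⟨hA e' he' x y hxy, hA e' he' y x (hxy.trans Sym2.eq_swap)⟩
  simp only [hxy']

lemma laplacian_eq_of_forall_ne {χ : G.V → ℤ} {e : G.E} {u v : G.V} (h : G.ends e = s(u, v))
    (hχ : ∀ e' ≠ e, ∀ x y, G.ends e' = s(x, y) → χ x = χ y) :
    G.laplacian χ = (χ u - χ v) • (Pi.single u 1 - Pi.single v 1) := by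
  rw [laplacian_eq_sum_edgeLaplacian, sum_eq_single e, edgeLaplacian_of_ends_eq h]
  · intro e' _ he'
    obtain ⟨a, b, hab⟩ := G.exists_ends_eq e'
    rw [edgeLaplacian_of_ends_eq hab, hχ e' he' a b hab, sub_self, zero_smul]
  · simp

end Multigraph

/-- `G'` is `G` with all bridges contracted: `π` identifies the endpoints of every bridge and
nothing more, and `ι` identifies the edges of `G'` with the non-bridge edges of `G`. -/
structure BridgeContraction (G G' : Multigraph) where
  π : G.V → G'.V
  ι : G'.E → G.E
  ι_injective : Function.Injective ι
  exists_ι_eq_iff : ∀ e, (∃ e', ι e' = e) ↔ ¬ G.IsBridge e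
  ends_ι : ∀ e', G'.ends e' = Sym2.map π (G.ends (ι e'))
  π_surjective : Function.Surjective π
  π_eq_iff : ∀ u v, π u = π v ↔
    Relation.EqvGen (fun a b => ∃ e, G.IsBridge e ∧ G.ends e = s(a, b)) u v

namespace BridgeContraction

open Multigraph

variable {G G' : Multigraph} (C : BridgeContraction G G')

noncomputable def σ : G'.V → G.V := Function.surjInv C.π_surjective

lemma π_σ (v' : G'.V) : C.π (C.σ v') = v' := Function.surjInv_eq _ _

lemma pushforward_π_σ (D' : G'.Divisor) : pushforward C.π (pushforward C.σ D') = D' := by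
  rw [pushforward_pushforward, show C.π ∘ C.σ = id from funext C.π_σ, pushforward_id]

lemma π_eq_of_isBridge {e : G.E} (he : G.IsBridge e) {a b : G.V} (h : G.ends e = s(a, b)) :
    C.π a = C.π b :=
  (C.π_eq_iff a b).2 (.rel _ _ ⟨e, he, h⟩)

lemma apply_eq_of_π_eq {α : Type*} {F : G.V → α}
    (hF : ∀ e, G.IsBridge e → ∃ a b, G.ends e = s(a, b) ∧ F a = F b)
    {u v : G.V} (h : C.π u = C.π v) : F u = F v := by
  refine (Equivalence.eqvGen_iff (r := fun x y => F x = F y) ⟨fun _ => rfl, Eq.symm, Eq.trans⟩).1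
    (Relation.EqvGen.mono ?_ u v ((C.π_eq_iff u v).1 h))
  rintro x y ⟨e, he, hxy⟩
  obtain ⟨a, b, hab, hFab⟩ := hF e he
  rcases Sym2.eq_iff.1 (hxy.symm.trans hab) with ⟨rfl, rfl⟩ | ⟨rfl, rfl⟩
  exacts [hFab, hFab.symm]

lemma pushforward_laplacian_comp (g : G'.V → ℤ) :
    pushforward C.π (G.laplacian (g ∘ C.π)) = G'.laplacian g := by
  classical
  rw [laplacian_eq_sum_edgeLaplacian, laplacian_eq_sum_edgeLaplacian, map_sum,
    ← sum_subset (subset_univ (univ.image C.ι)), sum_image fun _ _ _ _ h => C.ι_injective h]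
  · refine sum_congr rfl fun e' _ => ?_
    obtain ⟨a, b, hab⟩ := G.exists_ends_eq (C.ι e')
    have hab' : G'.ends e' = s(C.π a, C.π b) := by rw [C.ends_ι, hab, Sym2.map_mk]
    rw [edgeLaplacian_of_ends_eq hab, edgeLaplacian_of_ends_eq hab', map_zsmul, map_sub,
      pushforward_single, pushforward_single, Function.comp_apply, Function.comp_apply]
  · intro e _ he
    have hbridge : G.IsBridge e := not_not.1 fun h => he <| by
      simpa using (C.exists_ι_eq_iff e).2 h
    obtain ⟨a, b, hab⟩ := G.exists_ends_eq e
    rw [edgeLaplacian_of_ends_eq hab, Function.comp_apply, Function.comp_apply,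
      C.π_eq_of_isBridge hbridge hab, sub_self, zero_smul, map_zero]

lemma single_sub_single_mem_principal (hG : G.Connected) {u v : G.V} (h : C.π u = C.π v)
    (n : ℤ) : Pi.single u n - Pi.single v n ∈ G.principal := by
  have key : (Pi.single u 1 : G.Divisor) - Pi.single v 1 ∈ G.principal := by
    rw [← QuotientAddGroup.eq_iff_sub_mem]
    refine C.apply_eq_of_π_eq
      (F := fun w => ((Pi.single w 1 : G.Divisor) : G.Divisor ⧸ G.principal)) (fun e he => ?_) h
    obtain ⟨χ, a, b, hab, ha, hb, hχ⟩ := he.exists_cut hG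
    refine ⟨a, b, hab, QuotientAddGroup.eq_iff_sub_mem.2 ?_⟩
    have hlap := laplacian_eq_of_forall_ne hab hχ
    rw [ha, hb, sub_zero, one_smul] at hlap
    exact hlap ▸ G.laplacian_mem_principal χ
  have := zsmul_mem key n
  rwa [smul_sub, ← Pi.single_smul', ← Pi.single_smul', smul_eq_mul, mul_one] at this

lemma sub_pushforward_σ_π_mem_principal (hG : G.Connected) (D : G.Divisor) :
    D - pushforward C.σ (pushforward C.π D) ∈ G.principal := by
  rw [pushforward_pushforward, ← univ_sum_single D, map_sum, ← sum_sub_distrib]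
  refine sum_mem fun a _ => ?_
  rw [pushforward_single]
  exact C.single_sub_single_mem_principal hG (C.π_σ _).symm _

lemma pushforward_σ_mem_principal (hG : G.Connected) {D' : G'.Divisor}
    (hD' : D' ∈ G'.principal) : pushforward C.σ D' ∈ G.principal := by
  obtain ⟨g, rfl⟩ := hD'
  change pushforward C.σ (G'.laplacian g) ∈ _
  rw [← C.pushforward_laplacian_comp g]
  simpa using sub_mem (G.laplacian_mem_principal (g ∘ C.π))
    (C.sub_pushforward_σ_π_mem_principal hG (G.laplacian (g ∘ C.π)))

lemma pushforward_π_mem_principal (hG : G.Connected) {D : G.Divisor} (hD : D ∈ G.principal) :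
    pushforward C.π D ∈ G'.principal := by
  classical
  have : Nonempty G.V := hG.1
  obtain ⟨f, rfl⟩ := hD
  choose! χ u v hends hu hv hχ using fun e (he : G.IsBridge e) => he.exists_cut hG
  set B := univ.filter G.IsBridge
  -- `f'` differs from `f` by cut functions, whose Laplacians `π_*` kills, and it is constant
  -- across every bridge, hence of the form `g ∘ π`.
  set f' := f - ∑ e ∈ B, (f (u e) - f (v e)) • χ e with hf'
  have hf'_const : ∀ e ∈ B, f' (u e) = f' (v e) := by
    intro e he
    have hB := (mem_filter.1 he).2
    rw [← sub_eq_zero]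
    simp only [hf', Pi.sub_apply, Finset.sum_apply, Pi.smul_apply, smul_eq_mul]
    rw [sub_sub_sub_comm, ← sum_sub_distrib, sum_eq_single e]
    · rw [hu e hB, hv e hB]; ring
    · intro e' he' hne
      rw [hχ e' (mem_filter.1 he').2 e hne.symm _ _ (hends e hB)]; ring
    · exact fun h => absurd he h
  have hf : f = (f' ∘ C.σ) ∘ C.π + ∑ e ∈ B, (f (u e) - f (v e)) • χ e := by
    have : f' = (f' ∘ C.σ) ∘ C.π := funext fun w =>
      C.apply_eq_of_π_eq (fun e he => ⟨u e, v e, hends e he, hf'_const e (by simpa [B])⟩)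
        (C.π_σ (C.π w)).symm
    rw [← this, hf', sub_add_cancel]
  change pushforward C.π (G.laplacianHom f) ∈ _
  rw [hf, map_add, map_sum, map_add, map_sum]
  refine add_mem ?_ (sum_mem fun e he => ?_)
  · exact (C.pushforward_laplacian_comp _).symm ▸ G'.laplacian_mem_principal _
  · have hB := (mem_filter.1 he).2
    rw [map_zsmul, map_zsmul]
    change _ • pushforward C.π (G.laplacian (χ e)) ∈ _
    rw [laplacian_eq_of_forall_ne (hends e hB) (hχ e hB), hu e hB, hv e hB, map_zsmul, map_sub,
      pushforward_single, pushforward_single, C.π_eq_of_isBridge hB (hends e hB), sub_self,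
      smul_zero, smul_zero]
    exact zero_mem _

lemma rankGe_pushforward_π (hG : G.Connected) {D : G.Divisor} {k : ℤ} (h : G.RankGe D k) :
    G'.RankGe (pushforward C.π D) k := by
  intro F' hF' hdeg
  obtain ⟨E, hE, hDE⟩ :=
    h (pushforward C.σ F') (pushforward_nonneg _ hF') ((sum_pushforward _ _).trans hdeg)
  refine ⟨pushforward C.π E, pushforward_nonneg _ hE, G'.linEquiv_iff_sub_mem_principal.2 ?_⟩
  have := C.pushforward_π_mem_principal hG (G.linEquiv_iff_sub_mem_principal.1 hDE)
  rwa [map_sub, map_sub, C.pushforward_π_σ] at this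

lemma rankGe_pushforward_σ (hG : G.Connected) {D' : G'.Divisor} {k : ℤ} (h : G'.RankGe D' k) :
    G.RankGe (pushforward C.σ D') k := by
  intro F hF hdeg
  obtain ⟨E', hE', hDE'⟩ :=
    h (pushforward C.π F) (pushforward_nonneg _ hF) ((sum_pushforward _ _).trans hdeg)
  refine ⟨pushforward C.σ E', pushforward_nonneg _ hE', G.linEquiv_iff_sub_mem_principal.2 ?_⟩
  have := sub_mem (C.pushforward_σ_mem_principal hG (G'.linEquiv_iff_sub_mem_principal.1 hDE'))
    (C.sub_pushforward_σ_π_mem_principal hG F)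
  convert this using 1
  rw [map_sub, map_sub]
  abel

end BridgeContraction

open Multigraph in
theorem BridgeContraction.gonality_eq {G G' : Multigraph} (C : BridgeContraction G G')
    (hG : G.Connected) : G.gonality = G'.gonality := by
  have hV : Nonempty G.V := hG.1
  have hV' : Nonempty G'.V := hV.map C.π
  unfold gonality
  congr 1
  ext n
  constructor
  · rintro ⟨D, hD, hdeg, hrank⟩
    exact ⟨pushforward C.π D, pushforward_nonneg _ hD, (sum_pushforward _ _).trans hdeg,
      hrank.trans (rank_le_rank hV' fun _ _ => C.rankGe_pushforward_π hG)⟩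
  · rintro ⟨D', hD', hdeg, hrank⟩
    exact ⟨pushforward C.σ D', pushforward_nonneg _ hD', (sum_pushforward _ _).trans hdeg,
      hrank.trans (rank_le_rank hV fun _ _ => C.rankGe_pushforward_σ hG)⟩

/-- Let `G'` be the graph obtained from `G` by contracting every
bridge of `G` (so the vertices of `G'` are the classes of the equivalence relation
generated by "joined by a bridge", and the edges of `G'` are the non-bridge edges
of `G`). Then `gon(G) = 3` iff `gon(G') = 3`. -/
theorem stmt_9 (G G' : Multigraph) (hG : G.Connected)
    (π : G.V → G'.V) (ι : G'.E → G.E)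
    (hιinj : Function.Injective ι)
    (hιrange : ∀ e : G.E, (∃ e', ι e' = e) ↔ ¬ G.IsBridge e)
    (hends : ∀ e' : G'.E, G'.ends e' = Sym2.map π (G.ends (ι e')))
    (hπsurj : Function.Surjective π)
    (hπ : ∀ u v : G.V, π u = π v ↔
      Relation.EqvGen (fun a b => ∃ e, G.IsBridge e ∧ G.ends e = s(a, b)) u v) :
    (G.gonality = 3 ↔ G'.gonality = 3) := by
  rw [BridgeContraction.gonality_eq ⟨π, ι, hιinj, hιrange, hends, hπsurj, hπ⟩ hG]
end
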